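/- arXiv:0712.1485 — 3 statements merged into one kernel-verified Lean document; each statement's English description precedes it below -/
import Mathlib

section
/- If operators f_j^± satisfy the parafermion triple relations, then the elements E_{jk} := ½[f_j^+, f_k^-] satisfy the gl(n) commutation relations [E_{ij}, E_{kl}] = δ_{jk} E_{il} − δ_{li} E_{kj} for all i,j,k,l ∈ {1,…,n}. -/
/-!
Write `⁅a, b⁆ = a * b - b * a`. Since `ad X = ⁅X, -⁆` is a derivation,
`⁅X, ⁅f_k^+, f_l^-⁆⁆ = ⁅⁅X, f_k^+⁆, f_l^-⁆ + ⁅f_k^+, ⁅X, f_l^-⁆⁆`, and for `X = ⁅f_i^+, f_j^-⁆`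
the triple relations give `⁅X, f_k^+⁆ = 2 δ_{jk} f_i^+` and `⁅X, f_l^-⁆ = -2 δ_{il} f_j^-`.
Hence `⁅X, ⁅f_k^+, f_l^-⁆⁆ = 2 δ_{jk} ⁅f_i^+, f_l^-⁆ - 2 δ_{il} ⁅f_k^+, f_j^-⁆`, which is the
`gl(n)` relation after dividing by `4`.
-/

attribute [local instance] LieRing.ofAssociativeRing

namespace Parafermion

variable {n : ℕ} {A : Type*} [Ring A] [Algebra ℚ A]

def TripleRelations (fp fm : Fin n → A) : Prop :=
  ∀ (j k l : Fin n) (ξ η ε : ℚ),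
      (ξ = 1 ∨ ξ = -1) → (η = 1 ∨ η = -1) → (ε = 1 ∨ ε = -1) →
      (let f : Fin n → ℚ → A := fun i s => if s = 1 then fp i else fm i
       let c : A → A → A := fun a b => a * b - b * a
       c (c (f j ξ) (f k η)) (f l ε) =
         ((ε - η) ^ 2 / 2) • (if k = l then f j ξ else 0) -
         ((ε - ξ) ^ 2 / 2) • (if j = l then f k η else 0))

variable {fp fm : Fin n → A}

theorem TripleRelations.lie_lie_fp (h : TripleRelations fp fm) (i j k : Fin n) :
    ⁅⁅fp i, fm j⁆, fp k⁆ = (2 : ℚ) • (if j = k then fp i else 0) := by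
  have := h i j k 1 (-1) 1 (Or.inl rfl) (Or.inr rfl) (Or.inl rfl)
  norm_num [Ring.lie_def] at this ⊢
  exact this

theorem TripleRelations.lie_lie_fm (h : TripleRelations fp fm) (i j l : Fin n) :
    ⁅⁅fp i, fm j⁆, fm l⁆ = -(2 : ℚ) • (if l = i then fm j else 0) := by
  have := h i j l 1 (-1) (-1) (Or.inl rfl) (Or.inr rfl) (Or.inr rfl)
  norm_num [Ring.lie_def] at this ⊢
  simp only [this, eq_comm (a := l)]; split_ifs <;> simp

theorem TripleRelations.lie_lie_lie (h : TripleRelations fp fm) (i j k l : Fin n) :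
    ⁅⁅fp i, fm j⁆, ⁅fp k, fm l⁆⁆ =
      (2 : ℚ) • ((if j = k then ⁅fp i, fm l⁆ else 0) - (if l = i then ⁅fp k, fm j⁆ else 0)) := by
  rw [leibniz_lie, h.lie_lie_fp, h.lie_lie_fm]
  split_ifs <;> simp only [smul_lie, lie_smul, zero_lie, lie_zero, smul_zero] <;> module

end Parafermion

open Parafermion in
/-- if `f_j^±` satisfy the parafermion triple relations, then the elements
`E_{jk} := ½[f_j^+, f_k^-]` satisfy the `gl(n)` relations
`[E_{ij}, E_{kl}] = δ_{jk} E_{il} − δ_{li} E_{kj}`. -/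
theorem parafermion_gives_gl_relations
    (n : ℕ) (A : Type*) [Ring A] [Algebra ℚ A]
    (fp fm : Fin n → A)
    (triple : ∀ (j k l : Fin n) (ξ η ε : ℚ),
      (ξ = 1 ∨ ξ = -1) → (η = 1 ∨ η = -1) → (ε = 1 ∨ ε = -1) →
      (let f : Fin n → ℚ → A := fun i s => if s = 1 then fp i else fm i
       let c : A → A → A := fun a b => a * b - b * a
       c (c (f j ξ) (f k η)) (f l ε) =
         ((ε - η) ^ 2 / 2) • (if k = l then f j ξ else 0) -
         ((ε - ξ) ^ 2 / 2) • (if j = l then f k η else 0))) :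
    let E : Fin n → Fin n → A :=
      fun j k => (1 / 2 : ℚ) • (fp j * fm k - fm k * fp j)
    ∀ i j k l : Fin n,
      E i j * E k l - E k l * E i j =
        (if j = k then E i l else 0) - (if l = i then E k j else 0) := by
  intro E i j k l
  have hE : ∀ a b, E a b = (1 / 2 : ℚ) • ⁅fp a, fm b⁆ := fun a b => by rw [Ring.lie_def]
  calc E i j * E k l - E k l * E i j
      = (1 / 2 * (1 / 2) : ℚ) • ⁅⁅fp i, fm j⁆, ⁅fp k, fm l⁆⁆ := by
        rw [← Ring.lie_def, hE, hE, smul_lie, lie_smul, smul_smul]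
    _ = (if j = k then E i l else 0) - (if l = i then E k j else 0) := by
        rw [TripleRelations.lie_lie_lie triple, smul_smul, hE, hE]
        split_ifs <;> module
end

section
/- For any positive integer p and n ≥ 1, the product formula identity ∏_{1≤j≤k≤n} (p+1+2n−j−k)/(1+2n−j−k) = ∏_{i=0}^{⌊(n−1)/2⌋} C(p+2n−2i−1, 2n−4i−1) / C(2n−2i−1, 2n−4i−1) holds, where C(a,b) denotes the binomial coefficient. -/
/-!
Writing `m = 2n - 1 - j - k`, the left side is `∏ (p + m) / m` over the pairs `j ≤ k < n`, and
`C(p + a + L, L) / C(a + L, L) = ∏_{a < m ≤ a + L} (p + m) / m` turns the right side into the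
same kind of product over the pairs `(i, m)` with `2i < m ≤ 2n - 2i - 1`. The two index sets
correspond bijectively, with the same `m`, via `i = n - 1 - j - ⌊m/2⌋`.
-/

open Finset

theorem Nat.cast_choose_add_div_cast_choose (p a L : ℕ) :
    ((p + a + L).choose L : ℚ) / (a + L).choose L = ∏ m ∈ Ioc a (a + L), ((p : ℚ) + m) / m := by
  induction L with
  | zero => simp
  | succ L ih =>
    have hsucc (N : ℕ) : ((N + 1).choose (L + 1) : ℚ) = (N + 1) * N.choose L / (L + 1) := by
      rw [eq_div_iff (by positivity)]
      exact_mod_cast (Nat.add_one_mul_choose_eq N L).symm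
    have hpos : ((a + L).choose L : ℚ) ≠ 0 := by
      exact_mod_cast (Nat.choose_pos (Nat.le_add_left L a)).ne'
    rw [← add_assoc a, prod_Ioc_succ_top (Nat.le_add_right a L), ← ih, ← add_assoc, hsucc,
      hsucc]
    push_cast
    field_simp
    ring

theorem prod_fin_pairs_le_eq_prod_Ioc {M : Type*} [CommMonoid M] (f : ℕ → M) (n : ℕ) :
    ∏ q ∈ univ.filter (fun q : Fin n × Fin n => q.1 ≤ q.2), f (2 * n - 1 - q.1 - q.2) =
      ∏ i ∈ range ((n - 1) / 2 + 1), ∏ m ∈ Ioc (2 * i) (2 * n - 2 * i - 1), f m := by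
  rw [prod_sigma']
  refine prod_bij'
    (fun q _ => ⟨n - 1 - q.1 - (2 * n - 1 - q.1 - q.2) / 2, 2 * n - 1 - q.1 - q.2⟩)
    (fun x hx => (⟨n - 1 - (x.1 + x.2 / 2), by simp at hx; omega⟩,
      ⟨n + (x.1 + x.2 / 2) - x.2, by simp at hx; omega⟩)) ?_ ?_ ?_ ?_ ?_
  · intro q hq
    have := q.1.isLt; have := q.2.isLt
    simp only [mem_filter, mem_univ, true_and, Fin.le_def] at hq
    simp only [mem_sigma, mem_range, mem_Ioc]
    omega
  · intro x hx
    simp only [mem_sigma, mem_range, mem_Ioc] at hx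
    simp only [mem_filter, mem_univ, true_and, Fin.le_def]
    omega
  · intro q hq
    have := q.1.isLt; have := q.2.isLt
    simp only [mem_filter, mem_univ, true_and, Fin.le_def] at hq
    ext <;> simp only <;> omega
  · intro x hx
    simp only [mem_sigma, mem_range, mem_Ioc] at hx
    ext <;> simp only [heq_eq_eq] <;> omega
  · intro q _
    rfl

theorem dimension_product_binomial_identity_general (n p : ℕ) (hn : 1 ≤ n) :
    (∏ q ∈ Finset.univ.filter (fun q : Fin n × Fin n => q.1 ≤ q.2),
        ((p : ℚ) + 1 + 2 * n - ((q.1 : ℚ) + 1) - ((q.2 : ℚ) + 1)) /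
          (1 + 2 * n - ((q.1 : ℚ) + 1) - ((q.2 : ℚ) + 1))) =
      ∏ i ∈ Finset.range ((n - 1) / 2 + 1),
        ((p + 2 * n - 2 * i - 1).choose (2 * n - 4 * i - 1) : ℚ) /
          ((2 * n - 2 * i - 1).choose (2 * n - 4 * i - 1) : ℚ) := by
  have hfactor : ∀ q ∈ univ.filter (fun q : Fin n × Fin n => q.1 ≤ q.2),
      ((p : ℚ) + 1 + 2 * n - ((q.1 : ℚ) + 1) - ((q.2 : ℚ) + 1)) /
          (1 + 2 * n - ((q.1 : ℚ) + 1) - ((q.2 : ℚ) + 1)) =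
        ((p : ℚ) + ↑(2 * n - 1 - q.1 - q.2)) / ↑(2 * n - 1 - q.1 - q.2) := by
    intro q _
    have hcast : ((2 * n - 1 - q.1 - q.2 : ℕ) : ℚ) = 2 * n - 1 - q.1 - q.2 := by
      have := q.1.isLt; have := q.2.isLt
      rw [Nat.cast_sub (by omega), Nat.cast_sub (by omega), Nat.cast_sub (by omega)]
      push_cast; ring
    rw [hcast]; ring_nf
  rw [prod_congr rfl hfactor, prod_fin_pairs_le_eq_prod_Ioc (fun m => ((p : ℚ) + m) / m)]
  refine prod_congr rfl fun i hi => ?_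
  have h4i : 4 * i + 1 ≤ 2 * n - 1 := by rw [mem_range] at hi; omega
  rw [show p + 2 * n - 2 * i - 1 = p + 2 * i + (2 * n - 4 * i - 1) by omega,
    show 2 * n - 2 * i - 1 = 2 * i + (2 * n - 4 * i - 1) by omega]
  exact (Nat.cast_choose_add_div_cast_choose p (2 * i) (2 * n - 4 * i - 1)).symm

/-- for positive `p` and `n ≥ 1`,
`∏_{1≤j≤k≤n} (p+1+2n−j−k)/(1+2n−j−k)
  = ∏_{i=0}^{⌊(n−1)/2⌋} C(p+2n−2i−1, 2n−4i−1) / C(2n−2i−1, 2n−4i−1)`.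
(Indices `j,k : Fin n` are zero-indexed, corresponding to `j+1, k+1`.) -/
theorem dimension_product_binomial_identity (n p : ℕ) (hn : 1 ≤ n) (hp : 0 < p) :
    (∏ q ∈ Finset.univ.filter (fun q : Fin n × Fin n => q.1 ≤ q.2),
        ((p : ℚ) + 1 + 2 * n - ((q.1 : ℚ) + 1) - ((q.2 : ℚ) + 1)) /
          (1 + 2 * n - ((q.1 : ℚ) + 1) - ((q.2 : ℚ) + 1))) =
      ∏ i ∈ Finset.range ((n - 1) / 2 + 1),
        ((p + 2 * n - 2 * i - 1).choose (2 * n - 4 * i - 1) : ℚ) /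
          ((2 * n - 2 * i - 1).choose (2 * n - 4 * i - 1) : ℚ) :=
  dimension_product_binomial_identity_general n p hn
end

section
/- Define operators f_1^+, f_2^+, f_1^-, f_2^- on the vector space with orthonormal basis {|m₁₂,m₂₂;m₁₁⟩ : p ≥ m₁₂ ≥ m₁₁ ≥ m₂₂ ≥ 0 integers} by: f_1^+|m₁₂,m₂₂;m₁₁⟩ = √((m₁₁−m₂₂+1)(p−m₁₂)) |m₁₂+1,m₂₂;m₁₁+1⟩ − √((m₁₂−m₁₁)(m₂₂+1)) |m₁₂,m₂₂+1;m₁₁+1⟩, f_2^+|m₁₂,m₂₂;m₁₁⟩ = √((m₁₂−m₁₁+1)(p−m₁₂)) |m₁₂+1,m₂₂;m₁₁⟩ + √((m₁₁−m₂₂)(m₂₂+1)) |m₁₂,m₂₂+1;m₁₁⟩, and f_j^- the adjoints (transposes with respect to the given basis). Then [f_1^-, f_1^+] acts diagonally with [f_1^-,f_1^+]|m₁₂,m₂₂;m₁₁⟩ = (p − 2m₁₁)|m₁₂,m₂₂;m₁₁⟩. -/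
namespace StmtSO5

variable (p : ℕ)

/-- Validity of a triple `(m₁₂, m₂₂, m₁₁)`: `p ≥ m₁₂ ≥ m₁₁ ≥ m₂₂ ≥ 0`. -/
def valid (t : ℕ × ℕ × ℕ) : Prop := t.2.1 ≤ t.2.2 ∧ t.2.2 ≤ t.1 ∧ t.1 ≤ p

instance (t : ℕ × ℕ × ℕ) : Decidable (valid p t) := by unfold valid; infer_instance

/-- The so(5) Fock space `W(p)`: the real vector space with basis the valid triples. -/
abbrev V := {t : ℕ × ℕ × ℕ // valid p t} →₀ ℝ

/-- The basis vector `|m₁₂,m₂₂;m₁₁⟩`, interpreted as `0` when the triple is out of range. -/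
noncomputable def b (t : ℕ × ℕ × ℕ) : V p :=
  if h : valid p t then Finsupp.single ⟨t, h⟩ 1 else 0

/-- The inner product making the basis vectors orthonormal. -/
noncomputable def ip (u v : V p) : ℝ := u.sum fun t c => c * v t

/-- The defining matrix elements of `f₁⁺`. -/
def F1pAction (f1p : V p →ₗ[ℝ] V p) : Prop :=
  ∀ m12 m22 m11 : ℕ, valid p (m12, m22, m11) →
    f1p (b p (m12, m22, m11)) =
      Real.sqrt (((m11 : ℝ) - m22 + 1) * ((p : ℝ) - m12)) • b p (m12 + 1, m22, m11 + 1) -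
      Real.sqrt (((m12 : ℝ) - m11) * ((m22 : ℝ) + 1)) • b p (m12, m22 + 1, m11 + 1)

/-- The defining matrix elements of `f₂⁺`. -/
def F2pAction (f2p : V p →ₗ[ℝ] V p) : Prop :=
  ∀ m12 m22 m11 : ℕ, valid p (m12, m22, m11) →
    f2p (b p (m12, m22, m11)) =
      Real.sqrt (((m12 : ℝ) - m11 + 1) * ((p : ℝ) - m12)) • b p (m12 + 1, m22, m11) +
      Real.sqrt (((m11 : ℝ) - m22) * ((m22 : ℝ) + 1)) • b p (m12, m22 + 1, m11)

/-- `g` is the adjoint (transpose with respect to the given orthonormal basis) of `f`. -/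
def IsAdjoint (f g : V p →ₗ[ℝ] V p) : Prop := ∀ u v : V p, ip p (g u) v = ip p u (f v)

/-!
The transpose `f₁⁻` is read off from `f₁⁺` by adjointness: it lowers `|m⟩` along the same two
directions, with the coefficients of `f₁⁺` at the lowered triples. In `f₁⁻f₁⁺ − f₁⁺f₁⁻` each of
the off-diagonal vectors `|m₁₂ ± 1, m₂₂ ∓ 1; m₁₁⟩` arises once from each product, with equal
coefficients, so they cancel, and the diagonal coefficient is
`(m₁₁−m₂₂+1)(p−m₁₂) + (m₁₂−m₁₁)(m₂₂+1) − (m₁₁−m₂₂)(p−m₁₂+1) − (m₁₂−m₁₁+1)m₂₂ = p − 2m₁₁`.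
Out-of-range basis vectors never matter: their coefficients vanish.
-/

variable {p}

lemma valid_iff {m12 m22 m11 : ℕ} :
    valid p (m12, m22, m11) ↔ m22 ≤ m11 ∧ m11 ≤ m12 ∧ m12 ≤ p :=
  Iff.rfl

lemma b_apply (u : ℕ × ℕ × ℕ) {t : ℕ × ℕ × ℕ} (ht : valid p t) :
    b p u ⟨t, ht⟩ = if u = t then 1 else 0 := by
  by_cases hu : valid p u
  · simp [b, hu, Finsupp.single_apply, Subtype.ext_iff]
  · have : u ≠ t := fun h => hu (h ▸ ht)
    simp [b, hu, this]

lemma ip_b_right (u : V p) {t : ℕ × ℕ × ℕ} (ht : valid p t) : ip p u (b p t) = u ⟨t, ht⟩ := by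
  simp [ip, b, ht, Finsupp.single_apply, eq_comm]

lemma ip_b_left {t : ℕ × ℕ × ℕ} (ht : valid p t) (v : V p) : ip p (b p t) v = v ⟨t, ht⟩ := by
  simp [ip, b, ht]

lemma IsAdjoint.apply_b_apply {f g : V p →ₗ[ℝ] V p} (hg : IsAdjoint p f g)
    {s t : ℕ × ℕ × ℕ} (hs : valid p s) (ht : valid p t) :
    g (b p t) ⟨s, hs⟩ = f (b p s) ⟨t, ht⟩ := by
  rw [← ip_b_right _ hs, hg, ip_b_left ht]

/-- `f₁⁺|m⟩ = raiseCoeff₁ m • |m + (1,0,1)⟩ - raiseCoeff₂ m • |m + (0,1,1)⟩` and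
`f₁⁻|m⟩ = lowerCoeff₁ m • |m - (1,0,1)⟩ - lowerCoeff₂ m • |m - (0,1,1)⟩`. -/
noncomputable def raiseCoeff₁ (p m12 m22 m11 : ℕ) : ℝ :=
  Real.sqrt (((m11 : ℝ) - m22 + 1) * ((p : ℝ) - m12))

noncomputable def raiseCoeff₂ (m12 m22 m11 : ℕ) : ℝ :=
  Real.sqrt (((m12 : ℝ) - m11) * ((m22 : ℝ) + 1))

noncomputable def lowerCoeff₁ (p m12 m22 m11 : ℕ) : ℝ :=
  Real.sqrt (((m11 : ℝ) - m22) * ((p : ℝ) - m12 + 1))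

noncomputable def lowerCoeff₂ (m12 m22 m11 : ℕ) : ℝ :=
  Real.sqrt (((m12 : ℝ) - m11 + 1) * (m22 : ℝ))

lemma lowerCoeff₁_succ_m12_m11 (m12 m22 m11 : ℕ) :
    lowerCoeff₁ p (m12 + 1) m22 (m11 + 1) = raiseCoeff₁ p m12 m22 m11 := by
  simp only [lowerCoeff₁, raiseCoeff₁, Nat.cast_add, Nat.cast_one]; ring_nf

lemma lowerCoeff₂_succ_m22_m11 (m12 m22 m11 : ℕ) :
    lowerCoeff₂ m12 (m22 + 1) (m11 + 1) = raiseCoeff₂ m12 m22 m11 := by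
  simp only [lowerCoeff₂, raiseCoeff₂, Nat.cast_add, Nat.cast_one]; ring_nf

lemma raiseCoeff₁_succ_m22_m11 (m12 m22 m11 : ℕ) :
    raiseCoeff₁ p m12 (m22 + 1) (m11 + 1) = raiseCoeff₁ p m12 m22 m11 := by
  simp only [raiseCoeff₁, Nat.cast_add, Nat.cast_one]; ring_nf

lemma lowerCoeff₁_succ_m22_m11 (m12 m22 m11 : ℕ) :
    lowerCoeff₁ p m12 (m22 + 1) (m11 + 1) = lowerCoeff₁ p m12 m22 m11 := by
  simp only [lowerCoeff₁, Nat.cast_add, Nat.cast_one]; ring_nf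

lemma raiseCoeff₂_succ_m12_m11 (m12 m22 m11 : ℕ) :
    raiseCoeff₂ (m12 + 1) m22 (m11 + 1) = raiseCoeff₂ m12 m22 m11 := by
  simp only [raiseCoeff₂, Nat.cast_add, Nat.cast_one]; ring_nf

lemma lowerCoeff₂_succ_m12_m11 (m12 m22 m11 : ℕ) :
    lowerCoeff₂ (m12 + 1) m22 (m11 + 1) = lowerCoeff₂ m12 m22 m11 := by
  simp only [lowerCoeff₂, Nat.cast_add, Nat.cast_one]; ring_nf

section Transpose

variable {f g : V p →ₗ[ℝ] V p} {m12 m22 m11 : ℕ}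

lemma F1pAction.apply_b (hf : F1pAction p f) (hm : valid p (m12, m22, m11)) :
    f (b p (m12, m22, m11)) =
      raiseCoeff₁ p m12 m22 m11 • b p (m12 + 1, m22, m11 + 1) -
      raiseCoeff₂ m12 m22 m11 • b p (m12, m22 + 1, m11 + 1) :=
  hf m12 m22 m11 hm

lemma raiseCoeff₁_mul_ite_eq (s12 s22 s11 : ℕ) (hm : valid p (m12, m22, m11)) :
    raiseCoeff₁ p s12 s22 s11 * (if (s12 + 1, s22, s11 + 1) = (m12, m22, m11) then 1 else 0) =
      lowerCoeff₁ p m12 m22 m11 * (if (m12 - 1, m22, m11 - 1) = (s12, s22, s11) then 1 else 0) := by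
  obtain ⟨h22, h11, -⟩ := valid_iff.1 hm
  by_cases hraise : (s12 + 1, s22, s11 + 1) = (m12, m22, m11)
  · simp only [Prod.mk.injEq] at hraise
    obtain ⟨rfl, rfl, rfl⟩ := hraise
    simp [lowerCoeff₁_succ_m12_m11]
  · by_cases hlower : (m12 - 1, m22, m11 - 1) = (s12, s22, s11)
    · have : m11 = 0 ∧ m22 = 0 := by simp only [Prod.mk.injEq] at hraise hlower; omega
      simp [lowerCoeff₁, this]
    · simp [hraise, hlower]

lemma raiseCoeff₂_mul_ite_eq (s12 s22 s11 : ℕ) (hm : valid p (m12, m22, m11)) :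
    raiseCoeff₂ s12 s22 s11 * (if (s12, s22 + 1, s11 + 1) = (m12, m22, m11) then 1 else 0) =
      lowerCoeff₂ m12 m22 m11 * (if (m12, m22 - 1, m11 - 1) = (s12, s22, s11) then 1 else 0) := by
  obtain ⟨h22, -, -⟩ := valid_iff.1 hm
  by_cases hraise : (s12, s22 + 1, s11 + 1) = (m12, m22, m11)
  · simp only [Prod.mk.injEq] at hraise
    obtain ⟨rfl, rfl, rfl⟩ := hraise
    simp [lowerCoeff₂_succ_m22_m11]
  · by_cases hlower : (m12, m22 - 1, m11 - 1) = (s12, s22, s11)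
    · have : m22 = 0 := by simp only [Prod.mk.injEq] at hraise hlower; omega
      simp [lowerCoeff₂, this]
    · simp [hraise, hlower]

/-- Natural subtraction: when `m₁₁ = 0` (so `m₂₂ = 0`) the triples below are not the intended
ones, but both coefficients vanish. -/
lemma F1pAction.adjoint_apply_b (hf : F1pAction p f) (hg : IsAdjoint p f g)
    (hm : valid p (m12, m22, m11)) :
    g (b p (m12, m22, m11)) =
      lowerCoeff₁ p m12 m22 m11 • b p (m12 - 1, m22, m11 - 1) -
      lowerCoeff₂ m12 m22 m11 • b p (m12, m22 - 1, m11 - 1) := by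
  ext ⟨⟨s12, s22, s11⟩, hs⟩
  rw [hg.apply_b_apply hs hm, hf.apply_b hs]
  simp only [Finsupp.sub_apply, Finsupp.smul_apply, smul_eq_mul, b_apply]
  rw [raiseCoeff₁_mul_ite_eq _ _ _ hm, raiseCoeff₂_mul_ite_eq _ _ _ hm]

lemma F1pAction.adjoint_apply_apply_b (hf : F1pAction p f) (hg : IsAdjoint p f g)
    (hm : valid p (m12, m22, m11)) :
    g (f (b p (m12, m22, m11))) =
      (raiseCoeff₁ p m12 m22 m11 ^ 2 + raiseCoeff₂ m12 m22 m11 ^ 2) • b p (m12, m22, m11) -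
      (raiseCoeff₁ p m12 m22 m11 * lowerCoeff₂ m12 m22 m11) • b p (m12 + 1, m22 - 1, m11) -
      (raiseCoeff₂ m12 m22 m11 * lowerCoeff₁ p m12 m22 m11) • b p (m12 - 1, m22 + 1, m11) := by
  obtain ⟨h22, h11, h12⟩ := valid_iff.1 hm
  have hraise₁ : raiseCoeff₁ p m12 m22 m11 • g (b p (m12 + 1, m22, m11 + 1)) =
      raiseCoeff₁ p m12 m22 m11 • (raiseCoeff₁ p m12 m22 m11 • b p (m12, m22, m11) -
        lowerCoeff₂ m12 m22 m11 • b p (m12 + 1, m22 - 1, m11)) := by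
    rcases h12.lt_or_eq with hlt | rfl
    · rw [hf.adjoint_apply_b hg (m12 := m12 + 1) (m11 := m11 + 1)
        (valid_iff.2 ⟨by omega, by omega, hlt⟩)]
      simp only [Nat.add_sub_cancel, lowerCoeff₁_succ_m12_m11, lowerCoeff₂_succ_m12_m11]
    · simp [raiseCoeff₁]
  have hraise₂ : raiseCoeff₂ m12 m22 m11 • g (b p (m12, m22 + 1, m11 + 1)) =
      raiseCoeff₂ m12 m22 m11 • (lowerCoeff₁ p m12 m22 m11 • b p (m12 - 1, m22 + 1, m11) -
        raiseCoeff₂ m12 m22 m11 • b p (m12, m22, m11)) := by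
    rcases h11.lt_or_eq with hlt | rfl
    · rw [hf.adjoint_apply_b hg (m22 := m22 + 1) (m11 := m11 + 1)
        (valid_iff.2 ⟨by omega, hlt, h12⟩)]
      simp only [Nat.add_sub_cancel, lowerCoeff₁_succ_m22_m11, lowerCoeff₂_succ_m22_m11]
    · simp [raiseCoeff₂]
  rw [hf.apply_b hm, map_sub, map_smul, map_smul, hraise₁, hraise₂]
  module

lemma F1pAction.apply_adjoint_apply_b (hf : F1pAction p f) (hg : IsAdjoint p f g)
    (hm : valid p (m12, m22, m11)) :
    f (g (b p (m12, m22, m11))) =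
      (lowerCoeff₁ p m12 m22 m11 ^ 2 + lowerCoeff₂ m12 m22 m11 ^ 2) • b p (m12, m22, m11) -
      (raiseCoeff₁ p m12 m22 m11 * lowerCoeff₂ m12 m22 m11) • b p (m12 + 1, m22 - 1, m11) -
      (raiseCoeff₂ m12 m22 m11 * lowerCoeff₁ p m12 m22 m11) • b p (m12 - 1, m22 + 1, m11) := by
  obtain ⟨h22, h11, h12⟩ := valid_iff.1 hm
  have hlower₁ : lowerCoeff₁ p m12 m22 m11 • f (b p (m12 - 1, m22, m11 - 1)) =
      lowerCoeff₁ p m12 m22 m11 • (lowerCoeff₁ p m12 m22 m11 • b p (m12, m22, m11) -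
        raiseCoeff₂ m12 m22 m11 • b p (m12 - 1, m22 + 1, m11)) := by
    rcases h22.lt_or_eq with hlt | rfl
    · obtain ⟨k, rfl⟩ : ∃ k, m11 = k + 1 := ⟨m11 - 1, by omega⟩
      obtain ⟨l, rfl⟩ : ∃ l, m12 = l + 1 := ⟨m12 - 1, by omega⟩
      simp only [Nat.add_sub_cancel, lowerCoeff₁_succ_m12_m11, raiseCoeff₂_succ_m12_m11]
      rw [hf.apply_b (valid_iff.2 ⟨by omega, by omega, by omega⟩)]
    · simp [lowerCoeff₁]
  have hlower₂ : lowerCoeff₂ m12 m22 m11 • f (b p (m12, m22 - 1, m11 - 1)) =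
      lowerCoeff₂ m12 m22 m11 • (raiseCoeff₁ p m12 m22 m11 • b p (m12 + 1, m22 - 1, m11) -
        lowerCoeff₂ m12 m22 m11 • b p (m12, m22, m11)) := by
    rcases m22 with _ | j
    · simp [lowerCoeff₂]
    · obtain ⟨k, rfl⟩ : ∃ k, m11 = k + 1 := ⟨m11 - 1, by omega⟩
      simp only [Nat.add_sub_cancel, lowerCoeff₂_succ_m22_m11, raiseCoeff₁_succ_m22_m11]
      rw [hf.apply_b (valid_iff.2 ⟨by omega, by omega, h12⟩)]
  rw [hf.adjoint_apply_b hg hm, map_sub, map_smul, map_smul, hlower₁, hlower₂]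
  module

end Transpose

lemma raiseCoeff_sq_sub_lowerCoeff_sq {m12 m22 m11 : ℕ} (hm : valid p (m12, m22, m11)) :
    raiseCoeff₁ p m12 m22 m11 ^ 2 + raiseCoeff₂ m12 m22 m11 ^ 2 -
      (lowerCoeff₁ p m12 m22 m11 ^ 2 + lowerCoeff₂ m12 m22 m11 ^ 2) = (p : ℝ) - 2 * m11 := by
  have ⟨h22, h11, h12⟩ : (m22 : ℝ) ≤ m11 ∧ (m11 : ℝ) ≤ m12 ∧ (m12 : ℝ) ≤ p := by
    obtain ⟨h22, h11, h12⟩ := valid_iff.1 hm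
    exact ⟨by exact_mod_cast h22, by exact_mod_cast h11, by exact_mod_cast h12⟩
  simp only [raiseCoeff₁, raiseCoeff₂, lowerCoeff₁, lowerCoeff₂]
  rw [Real.sq_sqrt (by nlinarith), Real.sq_sqrt (by positivity), Real.sq_sqrt (by nlinarith),
    Real.sq_sqrt (by positivity)]
  ring

theorem f1_commutator_diagonal_general
    (f1p f1m : V p →ₗ[ℝ] V p)
    (h1 : F1pAction p f1p)
    (h1m : IsAdjoint p f1p f1m) :
    ∀ m12 m22 m11 : ℕ, valid p (m12, m22, m11) →
      f1m (f1p (b p (m12, m22, m11))) - f1p (f1m (b p (m12, m22, m11))) =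
        ((p : ℝ) - 2 * m11) • b p (m12, m22, m11) := by
  intro m12 m22 m11 hm
  rw [h1.adjoint_apply_apply_b h1m hm, h1.apply_adjoint_apply_b h1m hm,
    ← raiseCoeff_sq_sub_lowerCoeff_sq hm]
  module

/-- with `f₁⁺, f₂⁺` given by the explicit so(5) matrix elements and
`f₁⁻, f₂⁻` their transposes, the commutator `[f₁⁻, f₁⁺]` acts diagonally:
`[f₁⁻,f₁⁺]|m₁₂,m₂₂;m₁₁⟩ = (p − 2m₁₁)|m₁₂,m₂₂;m₁₁⟩`. -/
theorem f1_commutator_diagonal (hp : 0 < p)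
    (f1p f2p f1m f2m : V p →ₗ[ℝ] V p)
    (h1 : F1pAction p f1p) (h2 : F2pAction p f2p)
    (h1m : IsAdjoint p f1p f1m) (h2m : IsAdjoint p f2p f2m) :
    ∀ m12 m22 m11 : ℕ, valid p (m12, m22, m11) →
      f1m (f1p (b p (m12, m22, m11))) - f1p (f1m (b p (m12, m22, m11))) =
        ((p : ℝ) - 2 * m11) • b p (m12, m22, m11) :=
  f1_commutator_diagonal_general f1p f1m h1 h1m

end StmtSO5
end
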